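/- arXiv:0903.0316 — 6 statements merged into one kernel-verified Lean document; each statement's English description precedes it below -/
import Mathlib

section
/- Let α,β,γ,δ,k,l be integers with k,l ≥ 0, with (α,β) and (γ,δ) not ordered (i.e. either α<γ and β>δ, or α>γ and β<δ). If k−l = 0 or k−l = (α−γ)+(δ−β), then [(α−k)−(γ−l)]^+ + [(β+k)−(δ+l)]^+ = [α−γ]^+ + [β−δ]^+. -/
theorem map_sub_add_map_add_of_eq_zero_or_eq_sub {G M : Type*} [AddCommGroup G] [AddCommMagma M]
    (f : G → M) {a b d : G} (h : d = 0 ∨ d = a - b) :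
    f (a - d) + f (b + d) = f a + f b := by
  rcases h with rfl | rfl
  · rw [sub_zero, add_zero]
  · rw [sub_sub_cancel, add_sub_cancel, add_comm]

theorem stmt6_general (α β γ δ k l : ℤ)
    (hkl : k - l = 0 ∨ k - l = (α - γ) + (δ - β)) :
    max ((α - k) - (γ - l)) 0 + max ((β + k) - (δ + l)) 0
      = max (α - γ) 0 + max (β - δ) 0 := by
  have hshift : k - l = 0 ∨ k - l = (α - γ) - (β - δ) :=
    hkl.imp_right fun h => by rw [h]; ring
  convert map_sub_add_map_add_of_eq_zero_or_eq_sub (fun x : ℤ => max x 0) hshift using 3 <;> ring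

theorem stmt6 (α β γ δ k l : ℤ) (hk : 0 ≤ k) (hl : 0 ≤ l)
    (hno : (α < γ ∧ δ < β) ∨ (γ < α ∧ β < δ))
    (hkl : k - l = 0 ∨ k - l = (α - γ) + (δ - β)) :
    max ((α - k) - (γ - l)) 0 + max ((β + k) - (δ + l)) 0
      = max (α - γ) 0 + max (β - δ) 0 :=
  stmt6_general α β γ δ k l hkl
end

section
/- Let (Γ_k)_{k≥1} and (Γ'_l)_{l≥1} be summable sequences of nonnegative reals with partial tails Σ_k = Σ_{k'>k} Γ_{k'} and Σ'_l = Σ_{l'>l} Γ'_{l'}. For positive k,l define G(k,l) = (Γ_k − Γ_k ∧ (Σ'_l − Σ_k ∧ Σ'_l)) ∧ (Γ'_l − Γ'_l ∧ (Σ_k − Σ_k ∧ Σ'_l)), G(k,0) = Γ_k − Γ_k ∧ (Σ'_0 − Σ_k ∧ Σ'_0), G(0,l) = Γ'_l − Γ'_l ∧ (Σ_0 − Σ_0 ∧ Σ'_l), G(0,0) = 0. Then for every k ≥ 1, Σ_{l≥0} G(k,l) = Γ_k, and for every l ≥ 1, Σ_{k≥0} G(k,l) = Γ'_l. -/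
/-!
Write `a = Σ_k`, `g = Γ_k` (so `Σ_{k-1} = a + g`) and `b = Σ'_l`, `g' = Γ'_l`. A case analysis
shows that `G(k, l)` is the mixed second difference of `(x, y) ↦ x ∧ y` over the rectangle
`[a, a + g] × [b, b + g']`. Since `Σ'_{l-1} = Σ'_l + Γ'_l`, the row `l ↦ G(k, l)`, `l ≥ 1`,
telescopes to `F 0 - lim F`, where `F l = (a + g) ∧ Σ'_l - a ∧ Σ'_l`. As `Σ'_l → 0` and
`a, g ≥ 0`, the limit is `0`, and `F 0 = Γ_k ∧ (Σ'_0 - Σ_k ∧ Σ'_0)` is exactly what `G(k, 0)`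
subtracts from `Γ_k`. The column sums follow by symmetry.
-/

open Filter Topology

/-- `G(k, l)` in terms of `g = Γ_k`, `g' = Γ'_l`, `a = Σ_k`, `b = Σ'_l`. -/
def couplingRate (g g' a b : ℝ) : ℝ :=
  min (g - min g (b - min a b)) (g' - min g' (a - min a b))

lemma couplingRate_comm (g g' a b : ℝ) : couplingRate g g' a b = couplingRate g' g b a := by
  rw [couplingRate, couplingRate, min_comm b a, min_comm]

lemma couplingRate_nonneg (g g' a b : ℝ) : 0 ≤ couplingRate g g' a b :=
  le_min (sub_nonneg.2 (min_le_left _ _)) (sub_nonneg.2 (min_le_left _ _))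

lemma couplingRate_eq_sub {g g' : ℝ} (hg : 0 ≤ g) (hg' : 0 ≤ g') (a b : ℝ) :
    couplingRate g g' a b
      = (min (a + g) (b + g') - min a (b + g')) - (min (a + g) b - min a b) := by
  simp only [couplingRate, min_def]
  split_ifs <;> linarith

lemma min_add_sub_min {g : ℝ} (hg : 0 ≤ g) (a b : ℝ) :
    min (a + g) b - min a b = min g (b - min a b) := by
  simp only [min_def]
  split_ifs <;> linarith

lemma hasSum_of_eq_sub_succ {f F : ℕ → ℝ} (hf : ∀ n, 0 ≤ f n) (hfF : ∀ n, f n = F n - F (n + 1))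
    (hF : Tendsto F atTop (𝓝 0)) : HasSum f (F 0) := by
  refine (hasSum_iff_tendsto_nat_of_nonneg hf _).2 ?_
  simp_rw [hfF, Finset.sum_range_sub']
  simpa using tendsto_const_nhds.sub hF

lemma hasSum_couplingRate_row {g a : ℝ} (hg : 0 ≤ g) (ha : 0 ≤ a) {γ S : ℕ → ℝ}
    (hγ : ∀ l, 0 ≤ γ l) (hS : ∀ l, S l = S (l + 1) + γ (l + 1))
    (hS_lim : Tendsto S atTop (𝓝 0)) {H : ℕ → ℝ}
    (hH₀ : H 0 = g - min g (S 0 - min a (S 0)))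
    (hH : ∀ l, 1 ≤ l → H l = couplingRate g (γ l) a (S l)) :
    HasSum H g := by
  set F : ℕ → ℝ := fun l => min (a + g) (S l) - min a (S l)
  have hF_lim : Tendsto F atTop (𝓝 0) := by
    have := ((tendsto_const_nhds (x := a + g)).min hS_lim).sub
      ((tendsto_const_nhds (x := a)).min hS_lim)
    rwa [min_eq_right (add_nonneg ha hg), min_eq_right ha, sub_self] at this
  have hF : ∀ l, H (l + 1) = F l - F (l + 1) := fun l => by
    rw [hH (l + 1) (by omega), couplingRate_eq_sub hg (hγ _)]
    simp only [F]
    rw [hS l]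
  have hH_nonneg : ∀ l, 0 ≤ H (l + 1) := fun l => by
    rw [hH (l + 1) (by omega)]
    exact couplingRate_nonneg ..
  convert (hasSum_of_eq_sub_succ hH_nonneg hF hF_lim).zero_add using 1
  rw [hH₀, show F 0 = _ from min_add_sub_min hg a (S 0)]
  ring

section Tails

variable {Γ : ℕ → ℝ}

lemma tsum_ite_lt_eq_tsum_nat_add (Γ : ℕ → ℝ) (k : ℕ) :
    (∑' k', if k < k' then Γ k' else 0) = ∑' i, Γ (i + (k + 1)) := by
  rw [← (add_left_injective (k + 1)).tsum_eq]
  · exact tsum_congr fun i => if_pos (by omega)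
  · intro x hx
    have hkx : k < x := by by_contra h; exact hx (if_neg h)
    exact ⟨x - (k + 1), by simp only; omega⟩

lemma tsum_ite_lt_eq_tsum_ite_succ_lt_add (hΓ : Summable Γ) (k : ℕ) :
    (∑' k', if k < k' then Γ k' else 0)
      = (∑' k', if k + 1 < k' then Γ k' else 0) + Γ (k + 1) := by
  rw [tsum_ite_lt_eq_tsum_nat_add, tsum_ite_lt_eq_tsum_nat_add,
    ((summable_nat_add_iff (k + 1)).2 hΓ).tsum_eq_zero_add, add_comm, zero_add]
  congr 2 with i
  ring_nf

lemma tsum_ite_lt_nonneg (hΓ : ∀ k, 0 ≤ Γ k) (k : ℕ) :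
    0 ≤ ∑' k', if k < k' then Γ k' else 0 :=
  tsum_nonneg fun k' => by split_ifs <;> simp [hΓ]

lemma tendsto_tsum_ite_lt_atTop (Γ : ℕ → ℝ) :
    Tendsto (fun k => ∑' k', if k < k' then Γ k' else 0) atTop (𝓝 0) := by
  simp_rw [tsum_ite_lt_eq_tsum_nat_add]
  exact (tendsto_sum_nat_add Γ).comp (tendsto_add_atTop_nat 1)

end Tails

theorem stmt7_general (Γ Γ' : ℕ → ℝ) (hΓ : ∀ k, 0 ≤ Γ k) (hΓ' : ∀ l, 0 ≤ Γ' l)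
    (hsum : Summable Γ) (hsum' : Summable Γ')
    (Sa Sb : ℕ → ℝ)
    (hSa : ∀ k, Sa k = ∑' k' : ℕ, if k < k' then Γ k' else 0)
    (hSb : ∀ l, Sb l = ∑' l' : ℕ, if l < l' then Γ' l' else 0)
    (G : ℕ → ℕ → ℝ)
    (hG : ∀ k l, 1 ≤ k → 1 ≤ l → G k l =
      min (Γ k - min (Γ k) (Sb l - min (Sa k) (Sb l)))
          (Γ' l - min (Γ' l) (Sa k - min (Sa k) (Sb l))))
    (hGk0 : ∀ k, 1 ≤ k → G k 0 = Γ k - min (Γ k) (Sb 0 - min (Sa k) (Sb 0)))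
    (hG0l : ∀ l, 1 ≤ l → G 0 l = Γ' l - min (Γ' l) (Sa 0 - min (Sa 0) (Sb l))) :
    (∀ k, 1 ≤ k → ∑' l : ℕ, G k l = Γ k) ∧
    (∀ l, 1 ≤ l → ∑' k : ℕ, G k l = Γ' l) := by
  obtain rfl : Sa = _ := funext hSa
  obtain rfl : Sb = _ := funext hSb
  constructor
  · intro k hk
    exact (hasSum_couplingRate_row (hΓ k) (tsum_ite_lt_nonneg hΓ k) hΓ'
      (tsum_ite_lt_eq_tsum_ite_succ_lt_add hsum') (tendsto_tsum_ite_lt_atTop Γ')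
      (hGk0 k hk) (hG k · hk)).tsum_eq
  · intro l hl
    refine (hasSum_couplingRate_row (hΓ' l) (tsum_ite_lt_nonneg hΓ' l) hΓ
      (tsum_ite_lt_eq_tsum_ite_succ_lt_add hsum) (tendsto_tsum_ite_lt_atTop Γ)
      (H := (G · l)) ?_ fun k hk => (hG k l hk hl).trans (couplingRate_comm ..)).tsum_eq
    rw [hG0l l hl, min_comm (∑' _, _)]

/-- The coupling rates defined by the min-formulas have the correct marginals. -/
theorem stmt7 (Γ Γ' : ℕ → ℝ) (hΓ : ∀ k, 0 ≤ Γ k) (hΓ' : ∀ l, 0 ≤ Γ' l)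
    (hsum : Summable Γ) (hsum' : Summable Γ')
    (Sa Sb : ℕ → ℝ)
    (hSa : ∀ k, Sa k = ∑' k' : ℕ, if k < k' then Γ k' else 0)
    (hSb : ∀ l, Sb l = ∑' l' : ℕ, if l < l' then Γ' l' else 0)
    (G : ℕ → ℕ → ℝ)
    (hG : ∀ k l, 1 ≤ k → 1 ≤ l → G k l =
      min (Γ k - min (Γ k) (Sb l - min (Sa k) (Sb l)))
          (Γ' l - min (Γ' l) (Sa k - min (Sa k) (Sb l))))
    (hGk0 : ∀ k, 1 ≤ k → G k 0 = Γ k - min (Γ k) (Sb 0 - min (Sa k) (Sb 0)))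
    (hG0l : ∀ l, 1 ≤ l → G 0 l = Γ' l - min (Γ' l) (Sa 0 - min (Sa 0) (Sb l)))
    (hG00 : G 0 0 = 0) :
    (∀ k, 1 ≤ k → ∑' l : ℕ, G k l = Γ k) ∧
    (∀ l, 1 ≤ l → ∑' k : ℕ, G k l = Γ' l) :=
  stmt7_general Γ Γ' hΓ hΓ' hsum hsum' Sa Sb hSa hSb G hG hGk0 hG0l
end

section
/- With notation as above (summable nonnegative sequences Γ, Γ' with tails Σ, Σ', and coupling rates G defined via the min-formulas), for positive k and l ≥ 0 one has Σ_{l'>l} G(k,l') = Γ_k ∧ (Σ'_l − Σ_k ∧ Σ'_l), and for k ≥ 0 and positive l one has Σ_{k'>k} G(k',l) = (Σ_k − Σ_k ∧ Σ'_l) ∧ Γ'_l. -/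
/-!
Fix `k ≥ 1` and let `f(l) = Γ_k ∧ (Σ'_l − Σ_k ∧ Σ'_l)`. Since `Σ'_{l-1} = Σ'_l + Γ'_l`, a case
analysis on the order of `Σ_k`, `Σ'_l`, `Σ'_l + Γ'_l` shows that
the rate `G(k,l)` is the increment `f(l-1) − f(l)`. The row sums therefore telescope, and the
remainder `f(l)` tends to `0` together with `Σ'_l`. The column sums follow by exchanging the roles
of `Γ` and `Γ'`.
-/

open Filter Topology

lemma tsum_ite_lt_eq_tsum_add {α : Type*} [AddCommMonoid α] [TopologicalSpace α]
    (f : ℕ → α) (k : ℕ) :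
    (∑' m, if k < m then f m else 0) = ∑' i, f (i + (k + 1)) := by
  rw [← (add_left_injective (k + 1)).tsum_eq]
  · exact tsum_congr fun i => if_pos (by omega)
  · intro m hm
    have hkm : k < m := by by_contra h; exact hm (if_neg h)
    exact ⟨m - (k + 1), by simp only; omega⟩

lemma Antitone.hasSum_sub_succ {f : ℕ → ℝ} (hf : Antitone f)
    (hlim : Tendsto f atTop (𝓝 0)) : HasSum (fun i => f i - f (i + 1)) (f 0) := by
  refine (hasSum_iff_tendsto_nat_of_nonneg (fun i => sub_nonneg.2 (hf i.le_succ)) _).2 ?_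
  simp_rw [Finset.sum_range_sub']
  simpa using (tendsto_const_nhds (x := f 0)).sub hlim

noncomputable def tailSum (f : ℕ → ℝ) (k : ℕ) : ℝ := ∑' m, if k < m then f m else 0

section tailSum

variable {f : ℕ → ℝ}

lemma tailSum_eq_tsum_add (f : ℕ → ℝ) (k : ℕ) : tailSum f k = ∑' i, f (i + (k + 1)) :=
  tsum_ite_lt_eq_tsum_add f k

lemma tailSum_nonneg (hf : ∀ m, 0 ≤ f m) (k : ℕ) : 0 ≤ tailSum f k := by
  rw [tailSum_eq_tsum_add]
  exact tsum_nonneg fun i => hf _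

lemma tailSum_eq_add_tailSum_succ (hf : Summable f) (k : ℕ) :
    tailSum f k = f (k + 1) + tailSum f (k + 1) := by
  rw [tailSum_eq_tsum_add, tailSum_eq_tsum_add, ((summable_nat_add_iff _).2 hf).tsum_eq_zero_add,
    zero_add]
  congr 1
  exact tsum_congr fun i => by ring_nf

lemma tendsto_tailSum (f : ℕ → ℝ) : Tendsto (tailSum f) atTop (𝓝 0) := by
  simp_rw [funext (tailSum_eq_tsum_add f), ← add_assoc]
  exact (tendsto_sum_nat_add f).comp (tendsto_add_atTop_nat 1)

end tailSum

lemma min_sub_min_eq_sub (a b c : ℝ) {g : ℝ} (hg : 0 ≤ g) :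
    min (c - min c (b - min a b)) (g - min g (a - min a b))
      = min c (b + g - min a (b + g)) - min c (b - min a b) := by
  rcases le_total a b with h | h <;> rcases le_total a (b + g) with h2 | h2 <;>
    simp only [min_def] <;> split_ifs <;> linarith

lemma tsum_coupling_row {Γ' : ℕ → ℝ} (hΓ' : ∀ l, 0 ≤ Γ' l) (hsum' : Summable Γ')
    {a c : ℝ} (ha : 0 ≤ a) (hc : 0 ≤ c) (l : ℕ) :
    (∑' i, min (c - min c (tailSum Γ' (i + (l + 1)) - min a (tailSum Γ' (i + (l + 1)))))
        (Γ' (i + (l + 1)) - min (Γ' (i + (l + 1))) (a - min a (tailSum Γ' (i + (l + 1))))))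
      = min c (tailSum Γ' l - min a (tailSum Γ' l)) := by
  set S := tailSum Γ'
  set f : ℕ → ℝ := fun m => min c (S m - min a (S m))
  have hincr : ∀ m, min (c - min c (S (m + 1) - min a (S (m + 1))))
      (Γ' (m + 1) - min (Γ' (m + 1)) (a - min a (S (m + 1)))) = f m - f (m + 1) := fun m => by
    rw [min_sub_min_eq_sub _ _ _ (hΓ' _), ← add_comm, ← tailSum_eq_add_tailSum_succ hsum']
  have hanti : Antitone f := antitone_nat_of_succ_le fun m => sub_nonneg.1 <| by
    rw [← hincr]
    exact le_min (sub_nonneg.2 (min_le_left _ _)) (sub_nonneg.2 (min_le_left _ _))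
  have hlim : Tendsto f atTop (𝓝 0) := by
    refine squeeze_zero (fun m => le_min hc (sub_nonneg.2 (min_le_right _ _)))
      (fun m => ?_) (tendsto_tailSum Γ')
    have hmin := le_min ha (tailSum_nonneg hΓ' m)
    exact (min_le_right _ _).trans (by linarith)
  have hsum := (hanti.comp_monotone fun _ _ h => Nat.add_le_add_right h l).hasSum_sub_succ
    (hlim.comp (tendsto_add_atTop_nat l))
  refine ((hsum.congr_fun fun i => ?_).tsum_eq).trans (by simp [f])
  simp only [Function.comp_apply]
  rw [show i + (l + 1) = i + l + 1 by ring, hincr, add_right_comm]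

theorem stmt8_general (Γ Γ' : ℕ → ℝ) (hΓ : ∀ k, 0 ≤ Γ k) (hΓ' : ∀ l, 0 ≤ Γ' l)
    (hsum : Summable Γ) (hsum' : Summable Γ')
    (Sa Sb : ℕ → ℝ)
    (hSa : ∀ k, Sa k = ∑' k' : ℕ, if k < k' then Γ k' else 0)
    (hSb : ∀ l, Sb l = ∑' l' : ℕ, if l < l' then Γ' l' else 0)
    (G : ℕ → ℕ → ℝ)
    (hG : ∀ k l, 1 ≤ k → 1 ≤ l → G k l =
      min (Γ k - min (Γ k) (Sb l - min (Sa k) (Sb l)))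
          (Γ' l - min (Γ' l) (Sa k - min (Sa k) (Sb l)))) :
    (∀ k l : ℕ, 1 ≤ k →
      (∑' l' : ℕ, if l < l' then G k l' else 0)
        = min (Γ k) (Sb l - min (Sa k) (Sb l))) ∧
    (∀ k l : ℕ, 1 ≤ l →
      (∑' k' : ℕ, if k < k' then G k' l else 0)
        = min (Sa k - min (Sa k) (Sb l)) (Γ' l)) := by
  obtain rfl : Sa = tailSum Γ := funext hSa
  obtain rfl : Sb = tailSum Γ' := funext hSb
  refine ⟨fun k l hk => ?_, fun k l hl => ?_⟩
  · rw [tsum_ite_lt_eq_tsum_add, ← tsum_coupling_row hΓ' hsum' (tailSum_nonneg hΓ k) (hΓ k) l]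
    exact tsum_congr fun i => hG k _ hk (by omega)
  · rw [tsum_ite_lt_eq_tsum_add, min_comm, min_comm (tailSum Γ k),
      ← tsum_coupling_row hΓ hsum (tailSum_nonneg hΓ' l) (hΓ' l) k]
    refine tsum_congr fun i => ?_
    rw [hG _ l (by omega) hl, min_comm, min_comm (tailSum Γ' l)]

/-- Partial tail sums of the coupling rates. -/
theorem stmt8 (Γ Γ' : ℕ → ℝ) (hΓ : ∀ k, 0 ≤ Γ k) (hΓ' : ∀ l, 0 ≤ Γ' l)
    (hsum : Summable Γ) (hsum' : Summable Γ')
    (Sa Sb : ℕ → ℝ)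
    (hSa : ∀ k, Sa k = ∑' k' : ℕ, if k < k' then Γ k' else 0)
    (hSb : ∀ l, Sb l = ∑' l' : ℕ, if l < l' then Γ' l' else 0)
    (G : ℕ → ℕ → ℝ)
    (hG : ∀ k l, 1 ≤ k → 1 ≤ l → G k l =
      min (Γ k - min (Γ k) (Sb l - min (Sa k) (Sb l)))
          (Γ' l - min (Γ' l) (Sa k - min (Sa k) (Sb l))))
    (hGk0 : ∀ k, 1 ≤ k → G k 0 = Γ k - min (Γ k) (Sb 0 - min (Sa k) (Sb 0)))
    (hG0l : ∀ l, 1 ≤ l → G 0 l = Γ' l - min (Γ' l) (Sa 0 - min (Sa 0) (Sb l)))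
    (hG00 : G 0 0 = 0) :
    (∀ k l : ℕ, 1 ≤ k →
      (∑' l' : ℕ, if l < l' then G k l' else 0)
        = min (Γ k) (Sb l - min (Sa k) (Sb l))) ∧
    (∀ k l : ℕ, 1 ≤ l →
      (∑' k' : ℕ, if k < k' then G k' l else 0)
        = min (Sa k - min (Sa k) (Sb l)) (Γ' l)) :=
  stmt8_general Γ Γ' hΓ hΓ' hsum hsum' Sa Sb hSa hSb G hG
end

section
/- With Γ, Γ', Σ, Σ' as above, define the staircase path P = {(k_i,l_i)}_{i≥0} by (k_0,l_0)=(0,0) and, for i>0, (k_i,l_i) = (k_{i−1}+1, l_{i−1}) if Σ_{k_{i−1}} ≥ Σ'_{l_{i−1}} and (k_i,l_i) = (k_{i−1}, l_{i−1}+1) otherwise. Then any family (G(k,l))_{k,l≥0} of nonnegative reals solving the recursion G(k,l) = (Γ_k − Σ_{l'>l} G(k,l')) ∧ (Γ'_l − Σ_{k'>k} G(k',l)) (k,l ≥ 1), G(0,l) = Γ'_l − Σ_{k'>0} G(k',l), G(k,0) = Γ_k − Σ_{l'>0} G(k,l'), G(0,0)=0, satisfies: G(k,l) = 0 for (k,l)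 ∉ P, and G(k_i,l_i) = Σ_{k_{i−1}} ∨ Σ'_{l_{i−1}} − Σ_{k_i} ∨ Σ'_{l_i} for all i > 0. -/
/-!
With the row and column sums `∑ l, G k l = Γ k` and `∑ k, G k l = Γ' l`, the recursion at an
inner cell `(k, l)` reads `G k l = G k l + min (∑_{l' < l} G k l') (∑_{k' < k} G k' l)`, so no two
points of the support of `G` lie strictly south-east / north-west of each other. Hence the mass
`N k l` of `[k, ∞) × [l, ∞)` is `min (N k 0) (N 0 l)`: it is `N k 0` minus the mass of
`[k, ∞) × [0, l)` and `N 0 l` minus the mass of `[0, k) × [l, ∞)`, and one of these vanishes.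
By inclusion–exclusion, `G k l` is then the length of the overlap of the intervals
`[N (k + 1) 0, N k 0]` and `[N 0 (l + 1), N 0 l]`, whose endpoints `N (k + 1) 0 = Σ_k` and
`N 0 (l + 1) = Σ'_l` are the tails. The staircase merges the two decreasing sequences of
endpoints, so it visits every cell whose intervals overlap in more than a point, and at its `i`-th
cell the overlap is `[Σ_{k_i} ∨ Σ'_{l_i}, Σ_{k_{i-1}} ∨ Σ'_{l_{i-1}}]`.
-/

open Set Function

theorem tsum_ite_lt_eq_sub {α : Type*} [AddCommGroup α] [TopologicalSpace α]
    [IsTopologicalAddGroup α] [T2Space α] {f : ℕ → α} (hf : Summable f) (k : ℕ) :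
    ∑' n, (if k < n then f n else 0) = ∑' n, f n - ∑ i ∈ Finset.range (k + 1), f i := by
  rw [← hf.sum_add_tsum_compl (s := Finset.range (k + 1)), tsum_subtype, add_sub_cancel_left]
  refine tsum_congr fun n => ?_
  simp [indicator_apply]

theorem tsum_indicator_eq_zero_or {α M : Type*} [AddCommMonoid M] [TopologicalSpace M]
    {f : α → M} {s t : Set α} (h : ∀ x ∈ s, ∀ y ∈ t, f x = 0 ∨ f y = 0) :
    ∑' x, s.indicator f x = 0 ∨ ∑' x, t.indicator f x = 0 := by
  by_cases hs : ∀ x ∈ s, f x = 0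
  · left
    simp [indicator_apply_eq_zero.2 (hs _)]
  · push Not at hs
    obtain ⟨x, hx, hfx⟩ := hs
    right
    simp [indicator_apply_eq_zero.2 fun hy => (h x hx _ hy).resolve_left hfx]

theorem min_sub_min_sub_min_add_min {a a' b b' : ℝ} (ha : a' ≤ a) (hb : b' ≤ b) :
    min a b - min a' b - min a b' + min a' b' = max 0 (min a b - max a' b') := by
  simp only [min_def, max_def]
  split_ifs <;> linarith

noncomputable def jointTail (G : ℕ → ℕ → ℝ) (k l : ℕ) : ℝ :=
  ∑' p, (Ici k ×ˢ Ici l).indicator (uncurry G) p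

theorem jointTail_swap (G : ℕ → ℕ → ℝ) (k l : ℕ) : jointTail (swap G) l k = jointTail G k l := by
  rw [jointTail, ← (Equiv.prodComm ℕ ℕ).tsum_eq]
  refine tsum_congr fun ⟨a, b⟩ => ?_
  simp [indicator_apply, and_comm]

theorem jointTail_le_of_le {G : ℕ → ℕ → ℝ} (hG : ∀ k l, 0 ≤ G k l) (hs : Summable (uncurry G))
    {k k' l l' : ℕ} (hk : k ≤ k') (hl : l ≤ l') : jointTail G k' l' ≤ jointTail G k l :=
  (hs.indicator _).tsum_le_tsum
    (indicator_le_indicator_of_subset (prod_mono (Ici_subset_Ici.2 hk) (Ici_subset_Ici.2 hl))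
      fun p => hG p.1 p.2)
    (hs.indicator _)

theorem jointTail_inclusion_exclusion {G : ℕ → ℕ → ℝ} (hs : Summable (uncurry G)) (k l : ℕ) :
    jointTail G k l - jointTail G (k + 1) l - jointTail G k (l + 1) + jointTail G (k + 1) (l + 1)
      = G k l := by
  refine ((((hs.indicator _).hasSum.sub (hs.indicator _).hasSum).sub
    (hs.indicator _).hasSum).add (hs.indicator _).hasSum).unique ?_
  refine (hasSum_ite_eq (k, l) (G k l)).congr_fun fun ⟨a, b⟩ => ?_
  simp only [indicator_apply, mem_prod, mem_Ici, uncurry_apply_pair, Prod.mk.injEq]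
  split_ifs <;> first | omega | simp_all

/-- The length of `[u (k + 1), u k] ∩ [v (l + 1), v l]` when `u` and `v` are antitone. -/
def cellOverlap (u v : ℕ → ℝ) (k l : ℕ) : ℝ :=
  max 0 (min (u k) (v l) - max (u (k + 1)) (v (l + 1)))

structure SolvesCouplingRecursion (Γ Γ' : ℕ → ℝ) (G : ℕ → ℕ → ℝ) : Prop where
  nonneg : ∀ k l, 0 ≤ G k l
  inner : ∀ k l, 1 ≤ k → 1 ≤ l → G k l =
    min (Γ k - ∑' l', if l < l' then G k l' else 0) (Γ' l - ∑' k', if k < k' then G k' l else 0)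
  row_zero : ∀ l, 1 ≤ l → G 0 l = Γ' l - ∑' k', if 0 < k' then G k' l else 0
  col_zero : ∀ k, 1 ≤ k → G k 0 = Γ k - ∑' l', if 0 < l' then G k l' else 0

namespace SolvesCouplingRecursion

variable {Γ Γ' : ℕ → ℝ} {G : ℕ → ℕ → ℝ}

theorem swap (h : SolvesCouplingRecursion Γ Γ' G) :
    SolvesCouplingRecursion Γ' Γ (Function.swap G) where
  nonneg l k := h.nonneg k l
  inner l k hl hk := by rw [min_comm]; exact h.inner k l hk hl
  row_zero k hk := h.col_zero k hk
  col_zero l hl := h.row_zero l hl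

theorem le_of_one_le_snd (h : SolvesCouplingRecursion Γ Γ' G) {k l : ℕ} (hl : 1 ≤ l) :
    G k l ≤ Γ' l := by
  have htail : 0 ≤ ∑' k', if k < k' then G k' l else 0 :=
    tsum_nonneg fun k' => by split_ifs <;> simp [h.nonneg]
  rcases Nat.eq_zero_or_pos k with rfl | hk
  · rw [h.row_zero l hl]
    linarith
  · rw [h.inner k l hk hl]
    exact (min_le_right _ _).trans (by linarith)

theorem summable_row (h : SolvesCouplingRecursion Γ Γ' G) (hsum' : Summable Γ') (k : ℕ) :
    Summable (G k) := by
  rw [← summable_nat_add_iff 1]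
  exact ((summable_nat_add_iff 1).2 hsum').of_nonneg_of_le (fun l => h.nonneg k _)
    fun l => h.le_of_one_le_snd (by omega)

theorem tsum_row (h : SolvesCouplingRecursion Γ Γ' G) (hsum' : Summable Γ') {k : ℕ}
    (hk : 1 ≤ k) : ∑' l, G k l = Γ k := by
  have := h.col_zero k hk
  rw [tsum_ite_lt_eq_sub (h.summable_row hsum' k), Finset.sum_range_one] at this
  linarith

theorem sub_tail_eq_sum (h : SolvesCouplingRecursion Γ Γ' G) (hsum' : Summable Γ') {k : ℕ}
    (hk : 1 ≤ k) (l : ℕ) :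
    Γ k - ∑' l', (if l < l' then G k l' else 0) = ∑ l' ∈ Finset.range (l + 1), G k l' := by
  rw [tsum_ite_lt_eq_sub (h.summable_row hsum' k), h.tsum_row hsum' hk]
  ring

theorem eq_zero_or_eq_zero (h : SolvesCouplingRecursion Γ Γ' G) (hsum : Summable Γ)
    (hsum' : Summable Γ') {a b c d : ℕ} (hca : c < a) (hbd : b < d) : G a b = 0 ∨ G c d = 0 := by
  have hcol : Γ' d - ∑' k', (if a < k' then G k' d else 0) = ∑ k ∈ Finset.range (a + 1), G k d :=
    h.swap.sub_tail_eq_sum hsum (by omega) a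
  have hmin : min (∑ l ∈ Finset.range d, G a l) (∑ k ∈ Finset.range a, G k d) = 0 := by
    have := h.inner a d (by omega) (by omega)
    rw [h.sub_tail_eq_sum hsum' (by omega), hcol, Finset.sum_range_succ, Finset.sum_range_succ,
      min_add_add_right] at this
    linarith
  rcases min_choice (∑ l ∈ Finset.range d, G a l) (∑ k ∈ Finset.range a, G k d) with hm | hm <;>
    rw [hm, Finset.sum_eq_zero_iff_of_nonneg fun _ _ => h.nonneg _ _] at hmin
  · exact .inl (hmin b (Finset.mem_range.2 hbd))
  · exact .inr (hmin c (Finset.mem_range.2 hca))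

theorem summable_uncurry (h : SolvesCouplingRecursion Γ Γ' G) (hsum : Summable Γ)
    (hsum' : Summable Γ') : Summable (uncurry G) := by
  refine (summable_prod_of_nonneg fun p => h.nonneg p.1 p.2).2 ⟨h.summable_row hsum', ?_⟩
  rw [← summable_nat_add_iff 1]
  exact ((summable_nat_add_iff 1).2 hsum).congr fun k => (h.tsum_row hsum' (by omega)).symm

theorem tsum_tail_eq_jointTail (h : SolvesCouplingRecursion Γ Γ' G) (hsum : Summable Γ)
    (hsum' : Summable Γ') (k : ℕ) :
    ∑' k', (if k < k' then Γ k' else 0) = jointTail G (k + 1) 0 := by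
  rw [jointTail, ((h.summable_uncurry hsum hsum').indicator _).tsum_prod]
  refine tsum_congr fun k' => ?_
  split_ifs with hk
  · rw [← h.tsum_row hsum' (by omega)]
    refine tsum_congr fun l => ?_
    simp [hk]
  · simp [hk]

theorem jointTail_eq_min (h : SolvesCouplingRecursion Γ Γ' G) (hsum : Summable Γ)
    (hsum' : Summable Γ') (k l : ℕ) :
    jointTail G k l = min (jointTail G k 0) (jointTail G 0 l) := by
  have hs := h.summable_uncurry hsum hsum'
  have hnonneg : ∀ s : Set (ℕ × ℕ), 0 ≤ ∑' p, s.indicator (uncurry G) p :=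
    fun s => tsum_nonneg (indicator_nonneg fun p _ => h.nonneg p.1 p.2)
  have hk : jointTail G k 0 = jointTail G k l + ∑' p, (Ici k ×ˢ Iio l).indicator (uncurry G) p := by
    rw [jointTail, jointTail, ← (hs.indicator _).tsum_add (hs.indicator _)]
    refine tsum_congr fun ⟨a, b⟩ => ?_
    simp only [indicator_apply, mem_prod, mem_Ici, mem_Iio]
    split_ifs <;> first | omega | simp_all
  have hl : jointTail G 0 l = jointTail G k l + ∑' p, (Iio k ×ˢ Ici l).indicator (uncurry G) p := by
    rw [jointTail, jointTail, ← (hs.indicator _).tsum_add (hs.indicator _)]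
    refine tsum_congr fun ⟨a, b⟩ => ?_
    simp only [indicator_apply, mem_prod, mem_Ici, mem_Iio]
    split_ifs <;> first | omega | simp_all
  rcases tsum_indicator_eq_zero_or (f := uncurry G) (s := Ici k ×ˢ Iio l) (t := Iio k ×ˢ Ici l)
      fun p hp q hq => h.eq_zero_or_eq_zero hsum hsum' (hq.1.trans_le hp.1) (hp.2.trans_le hq.2)
    with h0 | h0
  · rw [min_eq_left (by linarith [hnonneg (Iio k ×ˢ Ici l)])]
    linarith
  · rw [min_eq_right (by linarith [hnonneg (Ici k ×ˢ Iio l)])]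
    linarith

theorem eq_cellOverlap (h : SolvesCouplingRecursion Γ Γ' G) (hsum : Summable Γ)
    (hsum' : Summable Γ') (k l : ℕ) :
    G k l = cellOverlap (jointTail G · 0) (jointTail G 0 ·) k l := by
  have hs := h.summable_uncurry hsum hsum'
  have hmin := h.jointTail_eq_min hsum hsum'
  rw [← jointTail_inclusion_exclusion hs, hmin k l, hmin (k + 1) l, hmin k (l + 1),
    hmin (k + 1) (l + 1)]
  exact min_sub_min_sub_min_add_min (jointTail_le_of_le h.nonneg hs k.le_succ le_rfl)
    (jointTail_le_of_le h.nonneg hs le_rfl l.le_succ)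

end SolvesCouplingRecursion

theorem exists_eq_and_succ_eq_of_lt {s : ℕ → ℕ} (h0 : s 0 = 0) (hs : ∀ i, s (i + 1) ≤ s i + 1)
    {m n : ℕ} (hm : m < s n) : ∃ j < n, s j = m ∧ s (j + 1) = m + 1 := by
  induction n with
  | zero => omega
  | succ n ih =>
    by_cases hmn : m < s n
    · obtain ⟨j, hj, hsj⟩ := ih hmn
      exact ⟨j, by omega, hsj⟩
    · have := hs n
      exact ⟨n, by omega, by omega, by omega⟩

/-- The staircase path, with the tails written `Σ_k = u (k + 1)` and `Σ'_l = v (l + 1)`. -/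
structure IsStaircase (u v : ℕ → ℝ) (k l : ℕ → ℕ) : Prop where
  fst_zero : k 0 = 0
  snd_zero : l 0 = 0
  step : ∀ i, (v (l i + 1) ≤ u (k i + 1) → k (i + 1) = k i + 1 ∧ l (i + 1) = l i) ∧
    (¬ v (l i + 1) ≤ u (k i + 1) → k (i + 1) = k i ∧ l (i + 1) = l i + 1)

namespace IsStaircase

variable {u v : ℕ → ℝ} {k l : ℕ → ℕ}

theorem step_cases (hP : IsStaircase u v k l) (i : ℕ) :
    (v (l i + 1) ≤ u (k i + 1) ∧ k (i + 1) = k i + 1 ∧ l (i + 1) = l i) ∨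
      (u (k i + 1) < v (l i + 1) ∧ k (i + 1) = k i ∧ l (i + 1) = l i + 1) := by
  by_cases hc : v (l i + 1) ≤ u (k i + 1)
  · exact .inl ⟨hc, (hP.step i).1 hc⟩
  · exact .inr ⟨not_le.1 hc, (hP.step i).2 hc⟩

theorem add_eq (hP : IsStaircase u v k l) (i : ℕ) : k i + l i = i := by
  induction i with
  | zero => simp [hP.fst_zero, hP.snd_zero]
  | succ i ih => rcases hP.step_cases i with ⟨-, hk, hl⟩ | ⟨-, hk, hl⟩ <;> omega

theorem exists_step_fst (hP : IsStaircase u v k l) {m n : ℕ} (hm : m < k n) :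
    ∃ j < n, k j = m ∧ v (l j + 1) ≤ u (m + 1) := by
  have hk : ∀ i, k (i + 1) ≤ k i + 1 := fun i => by
    rcases hP.step_cases i with ⟨-, hk, -⟩ | ⟨-, hk, -⟩ <;> omega
  obtain ⟨j, hj, hkj, hkj'⟩ := exists_eq_and_succ_eq_of_lt hP.fst_zero hk hm
  rcases hP.step_cases j with ⟨hc, -⟩ | ⟨-, hk, -⟩
  · exact ⟨j, hj, hkj, hkj ▸ hc⟩
  · omega

theorem exists_step_snd (hP : IsStaircase u v k l) {m n : ℕ} (hm : m < l n) :
    ∃ j < n, l j = m ∧ u (k j + 1) < v (m + 1) := by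
  have hl : ∀ i, l (i + 1) ≤ l i + 1 := fun i => by
    rcases hP.step_cases i with ⟨-, -, hl⟩ | ⟨-, -, hl⟩ <;> omega
  obtain ⟨j, hj, hlj, hlj'⟩ := exists_eq_and_succ_eq_of_lt hP.snd_zero hl hm
  rcases hP.step_cases j with ⟨-, -, hl⟩ | ⟨hc, -⟩
  · omega
  · exact ⟨j, hj, hlj, hlj ▸ hc⟩

theorem min_succ_eq_max (hP : IsStaircase u v k l) {i : ℕ}
    (hi : max (u (k i + 1)) (v (l i + 1)) ≤ min (u (k i)) (v (l i))) :
    min (u (k (i + 1))) (v (l (i + 1))) = max (u (k i + 1)) (v (l i + 1)) := by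
  rcases hP.step_cases i with ⟨hc, hk, hl⟩ | ⟨hc, hk, hl⟩ <;> rw [hk, hl]
  · rw [max_eq_left hc, min_eq_left ((le_max_left _ _).trans (hi.trans (min_le_right _ _)))]
  · rw [max_eq_right hc.le, min_eq_right ((le_max_right _ _).trans (hi.trans (min_le_left _ _)))]

theorem max_le_min (hP : IsStaircase u v k l) (hu : Antitone u) (hv : Antitone v) (h0 : u 0 = v 0)
    (i : ℕ) : max (u (k i + 1)) (v (l i + 1)) ≤ min (u (k i)) (v (l i)) := by
  induction i with
  | zero =>
    rw [hP.fst_zero, hP.snd_zero]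
    exact max_le (le_min (hu zero_le_one) ((hu zero_le_one).trans h0.le))
      (le_min ((hv zero_le_one).trans h0.ge) (hv zero_le_one))
  | succ i ih =>
    rw [hP.min_succ_eq_max ih]
    rcases hP.step_cases i with ⟨-, hk, hl⟩ | ⟨-, hk, hl⟩ <;>
      exact max_le_max (hu (by omega)) (hv (by omega))

theorem cellOverlap_succ (hP : IsStaircase u v k l) (hu : Antitone u) (hv : Antitone v)
    (h0 : u 0 = v 0) (i : ℕ) :
    cellOverlap u v (k (i + 1)) (l (i + 1))
      = max (u (k i + 1)) (v (l i + 1)) - max (u (k (i + 1) + 1)) (v (l (i + 1) + 1)) := by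
  have hmin := hP.min_succ_eq_max (hP.max_le_min hu hv h0 i)
  have hle := hP.max_le_min hu hv h0 (i + 1)
  rw [hmin] at hle
  rw [cellOverlap, hmin, max_eq_right (sub_nonneg.2 hle)]

theorem cellOverlap_eq_zero (hP : IsStaircase u v k l) (hu : Antitone u) (hv : Antitone v)
    {m n : ℕ} (hoff : ∀ i, ¬ (m = k i ∧ n = l i)) : cellOverlap u v m n = 0 := by
  suffices min (u m) (v n) ≤ max (u (m + 1)) (v (n + 1)) from
    max_eq_left (sub_nonpos.2 this)
  have hN := hP.add_eq (m + n)
  rcases lt_trichotomy m (k (m + n)) with hlt | heq | hgt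
  · obtain ⟨j, hj, hkj, hc⟩ := hP.exists_step_fst hlt
    have := hP.add_eq j
    exact (min_le_right _ _).trans
      ((hv (show l j + 1 ≤ n by omega)).trans (hc.trans (le_max_left _ _)))
  · exact absurd ⟨heq, by omega⟩ (hoff (m + n))
  · obtain ⟨j, hj, hlj, hc⟩ := hP.exists_step_snd (show n < l (m + n) by omega)
    have := hP.add_eq j
    exact (min_le_left _ _).trans
      ((hu (show k j + 1 ≤ m by omega)).trans (hc.le.trans (le_max_right _ _)))

end IsStaircase

theorem stmt10_general (Γ Γ' : ℕ → ℝ)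
    (hsum : Summable Γ) (hsum' : Summable Γ')
    (Sa Sb : ℕ → ℝ)
    (hSa : ∀ k, Sa k = ∑' k' : ℕ, if k < k' then Γ k' else 0)
    (hSb : ∀ l, Sb l = ∑' l' : ℕ, if l < l' then Γ' l' else 0)
    (G : ℕ → ℕ → ℝ) (hGpos : ∀ k l, 0 ≤ G k l)
    (hG : ∀ k l, 1 ≤ k → 1 ≤ l → G k l =
        min (Γ k - ∑' l' : ℕ, if l < l' then G k l' else 0)
            (Γ' l - ∑' k' : ℕ, if k < k' then G k' l else 0))
    (hG0l : ∀ l, 1 ≤ l → G 0 l = Γ' l - ∑' k' : ℕ, if 0 < k' then G k' l else 0)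
    (hGk0 : ∀ k, 1 ≤ k → G k 0 = Γ k - ∑' l' : ℕ, if 0 < l' then G k l' else 0)
    (kseq lseq : ℕ → ℕ) (hk0 : kseq 0 = 0) (hl0 : lseq 0 = 0)
    (hstep : ∀ i : ℕ,
      (Sb (lseq i) ≤ Sa (kseq i) → kseq (i + 1) = kseq i + 1 ∧ lseq (i + 1) = lseq i) ∧
      (¬ Sb (lseq i) ≤ Sa (kseq i) → kseq (i + 1) = kseq i ∧ lseq (i + 1) = lseq i + 1)) :
    (∀ k l : ℕ, (∀ i, ¬ (k = kseq i ∧ l = lseq i)) → G k l = 0) ∧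
    (∀ i : ℕ, 0 < i → G (kseq i) (lseq i)
      = max (Sa (kseq (i - 1))) (Sb (lseq (i - 1)))
        - max (Sa (kseq i)) (Sb (lseq i))) := by
  have hrec : SolvesCouplingRecursion Γ Γ' G := ⟨hGpos, hG, hG0l, hGk0⟩
  have hs := hrec.summable_uncurry hsum hsum'
  have hu : ∀ k, Sa k = jointTail G (k + 1) 0 := fun k =>
    (hSa k).trans (hrec.tsum_tail_eq_jointTail hsum hsum' k)
  have hv : ∀ l, Sb l = jointTail G 0 (l + 1) := fun l =>
    (hSb l).trans ((hrec.swap.tsum_tail_eq_jointTail hsum' hsum l).trans (jointTail_swap G 0 _))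
  have hP : IsStaircase (jointTail G · 0) (jointTail G 0 ·) kseq lseq :=
    ⟨hk0, hl0, by simpa only [hu, hv] using hstep⟩
  have hu_anti : Antitone (jointTail G · 0) := fun _ _ h => jointTail_le_of_le hGpos hs h le_rfl
  have hv_anti : Antitone (jointTail G 0 ·) := fun _ _ h => jointTail_le_of_le hGpos hs le_rfl h
  refine ⟨fun k l hoff => ?_, fun i hi => ?_⟩
  · rw [hrec.eq_cellOverlap hsum hsum']
    exact hP.cellOverlap_eq_zero hu_anti hv_anti hoff
  · obtain ⟨i, rfl⟩ := Nat.exists_eq_add_one_of_ne_zero hi.ne'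
    rw [hrec.eq_cellOverlap hsum hsum', hP.cellOverlap_succ hu_anti hv_anti rfl i]
    simp only [hu, hv, Nat.add_sub_cancel]

/-- Any nonnegative solution of the coupling recursion is supported on the
staircase path and is given there by differences of maxima of tails. -/
theorem stmt10 (Γ Γ' : ℕ → ℝ) (hΓ : ∀ k, 0 ≤ Γ k) (hΓ' : ∀ l, 0 ≤ Γ' l)
    (hsum : Summable Γ) (hsum' : Summable Γ')
    (Sa Sb : ℕ → ℝ)
    (hSa : ∀ k, Sa k = ∑' k' : ℕ, if k < k' then Γ k' else 0)
    (hSb : ∀ l, Sb l = ∑' l' : ℕ, if l < l' then Γ' l' else 0)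
    (G : ℕ → ℕ → ℝ) (hGpos : ∀ k l, 0 ≤ G k l)
    (hG : ∀ k l, 1 ≤ k → 1 ≤ l → G k l =
        min (Γ k - ∑' l' : ℕ, if l < l' then G k l' else 0)
            (Γ' l - ∑' k' : ℕ, if k < k' then G k' l else 0))
    (hG0l : ∀ l, 1 ≤ l → G 0 l = Γ' l - ∑' k' : ℕ, if 0 < k' then G k' l else 0)
    (hGk0 : ∀ k, 1 ≤ k → G k 0 = Γ k - ∑' l' : ℕ, if 0 < l' then G k l' else 0)
    (hG00 : G 0 0 = 0)
    (kseq lseq : ℕ → ℕ) (hk0 : kseq 0 = 0) (hl0 : lseq 0 = 0)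
    (hstep : ∀ i : ℕ,
      (Sb (lseq i) ≤ Sa (kseq i) → kseq (i + 1) = kseq i + 1 ∧ lseq (i + 1) = lseq i) ∧
      (¬ Sb (lseq i) ≤ Sa (kseq i) → kseq (i + 1) = kseq i ∧ lseq (i + 1) = lseq i + 1)) :
    (∀ k l : ℕ, (∀ i, ¬ (k = kseq i ∧ l = lseq i)) → G k l = 0) ∧
    (∀ i : ℕ, 0 < i → G (kseq i) (lseq i)
      = max (Sa (kseq (i - 1))) (Sb (lseq (i - 1)))
        - max (Sa (kseq i)) (Sb (lseq i))) :=
  stmt10_general Γ Γ' hsum hsum' Sa Sb hSa hSb G hGpos hG hG0l hGk0 kseq lseq hk0 hl0 hstep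
end

section
/- For the stick process with rates Γ^k_{α,β}(z) = p(z)·1_{k≤α}, the coupling rates defined by the general min-formulas equal: for k,l ≥ 1, G^{k;l}_{α,β;γ,δ}(z) = p(z)·1_{k≤α, l≤γ, α−γ=k−l}; G^{0;l}_{α,β;γ,δ}(z) = p(z)·1_{l≤γ−α} (when γ>α); G^{k;0}_{α,β;γ,δ}(z) = p(z)·1_{k≤α−γ} (when α>γ). -/
/-!
Every rate is `0` or `r = p(z) ≥ 0` and every tail is `r` times a natural number, so
`Γ - Γ ⊓ (Σ' - Σ ⊓ Σ')` is `Γ` when the tail of the other stick is no longer than this one's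
(the truncated difference of lengths vanishes) and `0` otherwise. The three formulas are then
linear arithmetic on these indicator conditions.
-/

section StickRates

variable {R : Type*} [Ring R] [LinearOrder R] [IsOrderedRing R] {r : R}

theorem mul_natCast_sub_min_self_left (hr : 0 ≤ r) (a b : ℕ) :
    r * a - min (r * a) (r * b) = r * ((a - b : ℕ) : R) := by
  rw [← mul_min_of_nonneg _ _ hr, ← mul_sub, ← Nat.mono_cast.map_min,
    ← Nat.cast_sub (min_le_left a b), ← Nat.sub_eq_sub_min]

theorem mul_natCast_sub_min_self_right (hr : 0 ≤ r) (a b : ℕ) :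
    r * b - min (r * a) (r * b) = r * ((b - a : ℕ) : R) := by
  rw [min_comm, mul_natCast_sub_min_self_left hr]

theorem ite_sub_min_mul_natCast (hr : 0 ≤ r) (P : Prop) [Decidable P] (n : ℕ) :
    (if P then r else 0) - min (if P then r else 0) (r * n) =
      if P ∧ n = 0 then r else 0 := by
  rcases n with _ | n
  · split_ifs <;> simp_all
  · have hrn : r ≤ r * (n + 1 : ℕ) := le_mul_of_one_le_right hr (by simp)
    have : (0 : R) ≤ r * (n + 1 : ℕ) := by positivity
    split_ifs <;> simp_all

end StickRates

theorem min_ite_ite {α : Type*} [LinearOrder α] [Zero α] {r : α} (hr : 0 ≤ r)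
    (P Q : Prop) [Decidable P] [Decidable Q] :
    min (if P then r else 0) (if Q then r else 0) = if P ∧ Q then r else 0 := by
  split_ifs <;> simp_all

theorem stmt15_general (r : ℝ) (hr : 0 ≤ r) (α γ : ℕ)
    (Γ Γ' : ℕ → ℝ)
    (hΓ : ∀ k, Γ k = if 1 ≤ k ∧ k ≤ α then r else 0)
    (hΓ' : ∀ l, Γ' l = if 1 ≤ l ∧ l ≤ γ then r else 0)
    (Sa Sb : ℕ → ℝ)
    (hSa : ∀ k, Sa k = r * ((α - k : ℕ) : ℝ))
    (hSb : ∀ l, Sb l = r * ((γ - l : ℕ) : ℝ))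
    (G : ℕ → ℕ → ℝ)
    (hG : ∀ k l, 1 ≤ k → 1 ≤ l → G k l =
      min (Γ k - min (Γ k) (Sb l - min (Sa k) (Sb l)))
          (Γ' l - min (Γ' l) (Sa k - min (Sa k) (Sb l))))
    (hGk0 : ∀ k, 1 ≤ k → G k 0 = Γ k - min (Γ k) (Sb 0 - min (Sa k) (Sb 0)))
    (hG0l : ∀ l, 1 ≤ l → G 0 l = Γ' l - min (Γ' l) (Sa 0 - min (Sa 0) (Sb l))) :
    (∀ k l, 1 ≤ k → 1 ≤ l →
      G k l = if k ≤ α ∧ l ≤ γ ∧ (α : ℤ) - γ = (k : ℤ) - l then r else 0) ∧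
    (∀ l, 1 ≤ l → α < γ → G 0 l = if l ≤ γ - α then r else 0) ∧
    (∀ k, 1 ≤ k → γ < α → G k 0 = if k ≤ α - γ then r else 0) := by
  simp only [hΓ, hΓ', hSa, hSb, mul_natCast_sub_min_self_left hr,
    mul_natCast_sub_min_self_right hr, ite_sub_min_mul_natCast hr] at hG hGk0 hG0l
  refine ⟨fun k l hk hl => ?_, fun l hl _ => ?_, fun k hk _ => ?_⟩
  · rw [hG k l hk hl, min_ite_ite hr]
    exact if_congr (by omega) rfl rfl
  · rw [hG0l l hl]
    exact if_congr (by omega) rfl rfl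
  · rw [hGk0 k hk]
    exact if_congr (by omega) rfl rfl

/-- Explicit form of the coupling rates for the stick process. -/
theorem stmt15 (r : ℝ) (hr : 0 ≤ r) (α γ : ℕ)
    (Γ Γ' : ℕ → ℝ)
    (hΓ : ∀ k, Γ k = if 1 ≤ k ∧ k ≤ α then r else 0)
    (hΓ' : ∀ l, Γ' l = if 1 ≤ l ∧ l ≤ γ then r else 0)
    (Sa Sb : ℕ → ℝ)
    (hSa : ∀ k, Sa k = r * ((α - k : ℕ) : ℝ))
    (hSb : ∀ l, Sb l = r * ((γ - l : ℕ) : ℝ))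
    (G : ℕ → ℕ → ℝ)
    (hG : ∀ k l, 1 ≤ k → 1 ≤ l → G k l =
      min (Γ k - min (Γ k) (Sb l - min (Sa k) (Sb l)))
          (Γ' l - min (Γ' l) (Sa k - min (Sa k) (Sb l))))
    (hGk0 : ∀ k, 1 ≤ k → G k 0 = Γ k - min (Γ k) (Sb 0 - min (Sa k) (Sb 0)))
    (hG0l : ∀ l, 1 ≤ l → G 0 l = Γ' l - min (Γ' l) (Sa 0 - min (Sa 0) (Sb l)))
    (hG00 : G 0 0 = 0) :
    (∀ k l, 1 ≤ k → 1 ≤ l →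
      G k l = if k ≤ α ∧ l ≤ γ ∧ (α : ℤ) - γ = (k : ℤ) - l then r else 0) ∧
    (∀ l, 1 ≤ l → α < γ → G 0 l = if l ≤ γ - α then r else 0) ∧
    (∀ k, 1 ≤ k → γ < α → G k 0 = if k ≤ α - γ then r else 0) :=
  stmt15_general r hr α γ Γ Γ' hΓ hΓ' Sa Sb hSa hSb G hG hGk0 hG0l
end

section
/- Consider the two-species exclusion process on {−1,0,1}^ℤ with the ten rates Γ^1_{0,−1}(z), Γ^2_{1,−1}(z), Γ^1_{1,−1}(z), Γ^1_{0,0}(z), Γ^1_{1,0}(z) for z = ±1 (all other rates zero). The necessary and sufficient attractiveness conditions (for all coordinatewise-ordered (α,β) ≤ (γ,δ) in {−1,0,1}⁴, all l ≥ 0: Σ_{k'>δ−β+l} Γ^{k'}_{α,β}(z) ≤ Σ_{l'>l} Γ^{l'}_{γ,δ}(z), and for all k ≥ 0: Σ_{k'>k} Γ^{k'}_{α,β}(z) ≥ Σ_{l'>γ−α+k} Γ^{l'}_{γ,δ}(z)) hold if and only if, for z = ±1: Γ^2_{1,−1}(z) ∨ Γ^1_{0,0}(z) ≤ Γ^1_{0,−1}(z)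 ∧ Γ^1_{1,0}(z) and Γ^1_{0,−1}(z) ∨ Γ^1_{1,0}(z) ≤ Γ^1_{1,−1}(z) + Γ^2_{1,−1}(z). -/
/-!
Write `T α β t = Σ_{k > t} Γ^k_{α,β}` and say that `(γ, δ)` dominates `(α, β)` when the two
attractiveness inequalities hold for this pair. Because the shifts `δ - β` and `γ - α` add up
along a chain `(α, β) ≤ (α', β') ≤ (γ, δ)`, domination is transitive, so it suffices to check it
on the twelve covering pairs of the product order on `{-1, 0, 1}²`; and since no jump moves more
than two units, `T α β t = 0` for `t ≥ 2`, so only `l, k ∈ {0, 1}` matter. Four of the covers,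
`(0,-1) < (1,-1)`, `(1,-1) < (1,0)`, `(0,-1) < (0,0)` and `(0,0) < (1,0)`, yield exactly the six
inequalities of the theorem, and these together with `Γ^2_{1,-1}, Γ^1_{0,0} ≥ 0` give all twelve.
-/

namespace TwoSpecies

local notation "𝕏" => ({-1, 0, 1} : Set ℤ)

def Dominates (T : ℤ → ℤ → ℤ → ℝ) (α β γ δ : ℤ) : Prop :=
  (∀ l : ℕ, T α β (δ - β + l) ≤ T γ δ l) ∧ (∀ k : ℕ, T γ δ (γ - α + k) ≤ T α β k)

section Dominates

variable {T : ℤ → ℤ → ℤ → ℝ}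

theorem dominates_refl (α β : ℤ) : Dominates T α β α β := by
  simp [Dominates]

theorem Dominates.trans {α β α' β' γ δ : ℤ} (h₁ : Dominates T α β α' β')
    (h₂ : Dominates T α' β' γ δ) (hα : α ≤ α') (hβ : β' ≤ δ) : Dominates T α β γ δ := by
  constructor
  · intro l
    obtain ⟨m, hm⟩ : ∃ m : ℕ, (m : ℤ) = δ - β' + l := ⟨(δ - β' + l).toNat, by omega⟩
    calc T α β (δ - β + l) = T α β (β' - β + m) := by rw [hm]; ring_nf
      _ ≤ T α' β' m := h₁.1 m
      _ = T α' β' (δ - β' + l) := by rw [hm]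
      _ ≤ T γ δ l := h₂.1 l
  · intro k
    obtain ⟨m, hm⟩ : ∃ m : ℕ, (m : ℤ) = α' - α + k := ⟨(α' - α + k).toNat, by omega⟩
    calc T γ δ (γ - α + k) = T γ δ (γ - α' + m) := by rw [hm]; ring_nf
      _ ≤ T α' β' m := h₂.2 m
      _ = T α' β' (α' - α + k) := by rw [hm]
      _ ≤ T α β k := h₁.2 k

theorem dominates_fst_of_covers {β : ℤ} (h₀ : Dominates T (-1) β 0 β)
    (h₁ : Dominates T 0 β 1 β) {α γ : ℤ} (hα : α ∈ 𝕏) (hγ : γ ∈ 𝕏) (hαγ : α ≤ γ) :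
    Dominates T α β γ β := by
  rcases hα with rfl | rfl | rfl <;> rcases hγ with rfl | rfl | rfl
  all_goals first
    | exact dominates_refl _ _
    | assumption
    | exact h₀.trans h₁ (by norm_num) le_rfl
    | norm_num at hαγ

theorem dominates_snd_of_covers {α : ℤ} (h₀ : Dominates T α (-1) α 0)
    (h₁ : Dominates T α 0 α 1) {β δ : ℤ} (hβ : β ∈ 𝕏) (hδ : δ ∈ 𝕏) (hβδ : β ≤ δ) :
    Dominates T α β α δ := by
  rcases hβ with rfl | rfl | rfl <;> rcases hδ with rfl | rfl | rfl
  all_goals first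
    | exact dominates_refl _ _
    | assumption
    | exact h₀.trans h₁ le_rfl (by norm_num)
    | norm_num at hβδ

theorem dominates_of_covers
    (hfst : ∀ β ∈ 𝕏, Dominates T (-1) β 0 β ∧ Dominates T 0 β 1 β)
    (hsnd : ∀ α ∈ 𝕏, Dominates T α (-1) α 0 ∧ Dominates T α 0 α 1)
    {α β γ δ : ℤ} (hα : α ∈ 𝕏) (hβ : β ∈ 𝕏) (hγ : γ ∈ 𝕏) (hδ : δ ∈ 𝕏)
    (hαγ : α ≤ γ) (hβδ : β ≤ δ) : Dominates T α β γ δ :=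
  (dominates_fst_of_covers (hfst β hβ).1 (hfst β hβ).2 hα hγ hαγ).trans
    (dominates_snd_of_covers (hsnd γ hγ).1 (hsnd γ hγ).2 hβ hδ hβδ) hαγ hβδ

theorem dominates_of_lt_two (hT : ∀ α β t, 2 ≤ t → T α β t = 0)
    {α β γ δ : ℤ} (hαγ : α ≤ γ) (hβδ : β ≤ δ)
    (h₁ : ∀ l : ℕ, l < 2 → T α β (δ - β + l) ≤ T γ δ l)
    (h₂ : ∀ k : ℕ, k < 2 → T γ δ (γ - α + k) ≤ T α β k) : Dominates T α β γ δ := by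
  refine ⟨fun l => ?_, fun k => ?_⟩
  · rcases lt_or_ge l 2 with hl | hl
    · exact h₁ l hl
    · rw [hT _ _ _ (by omega), hT _ _ _ (by omega)]
  · rcases lt_or_ge k 2 with hk | hk
    · exact h₂ k hk
    · rw [hT _ _ _ (by omega), hT _ _ _ (by omega)]

end Dominates

def rate (c01 c2 c11 c00 c10 : ℝ) (α β : ℤ) (k : ℕ) : ℝ :=
  if α = 0 ∧ β = -1 ∧ k = 1 then c01
  else if α = 1 ∧ β = -1 ∧ k = 2 then c2
  else if α = 1 ∧ β = -1 ∧ k = 1 then c11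
  else if α = 0 ∧ β = 0 ∧ k = 1 then c00
  else if α = 1 ∧ β = 0 ∧ k = 1 then c10
  else 0

def tail (r : ℤ → ℤ → ℕ → ℝ) (α β t : ℤ) : ℝ :=
  (if t < 1 then r α β 1 else 0) + (if t < 2 then r α β 2 else 0)

theorem tsum_ite_lt_of_support_subset {f : ℕ → ℝ} (hf : ∀ k, k ≠ 1 → k ≠ 2 → f k = 0)
    (t : ℤ) : (∑' k : ℕ, if t < k then f k else 0) =
      (if t < 1 then f 1 else 0) + (if t < 2 then f 2 else 0) := by
  rw [tsum_eq_sum (s := {1, 2}) fun k hk => by simp_all, Finset.sum_pair (by norm_num)]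
  norm_num

theorem rate_eq_zero (c01 c2 c11 c00 c10 : ℝ) (α β : ℤ) {k : ℕ} (h1 : k ≠ 1) (h2 : k ≠ 2) :
    rate c01 c2 c11 c00 c10 α β k = 0 := by
  simp [rate, h1, h2]

theorem tail_eq_zero {r : ℤ → ℤ → ℕ → ℝ} (α β : ℤ) {t : ℤ} (ht : 2 ≤ t) :
    tail r α β t = 0 := by
  simp [tail, not_lt.2 ht, not_lt.2 (by omega : 1 ≤ t)]

section Rates

variable {c01 c2 c11 c00 c10 : ℝ}

local notation "T" => tail (rate c01 c2 c11 c00 c10)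

theorem le_of_dominates_covers (h₁ : Dominates T 0 (-1) 1 (-1)) (h₂ : Dominates T 1 (-1) 1 0)
    (h₃ : Dominates T 0 (-1) 0 0) (h₄ : Dominates T 0 0 1 0) :
    max c2 c00 ≤ min c01 c10 ∧ max c01 c10 ≤ c11 + c2 := by
  have e₁ := h₁.1 0
  have e₂ := h₁.2 0
  have e₃ := h₂.1 0
  have e₄ := h₂.2 0
  have e₅ := h₃.2 0
  have e₆ := h₄.1 0
  norm_num [tail, rate] at e₁ e₂ e₃ e₄ e₅ e₆
  simp only [max_le_iff, le_min_iff]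
  exact ⟨⟨⟨e₂, e₅⟩, e₃, e₆⟩, e₁, e₄⟩

theorem dominates_covers_of_le (h : max c2 c00 ≤ min c01 c10 ∧ max c01 c10 ≤ c11 + c2)
    (hc2 : 0 ≤ c2) (hc00 : 0 ≤ c00) :
    (∀ β ∈ 𝕏, Dominates T (-1) β 0 β ∧ Dominates T 0 β 1 β) ∧
      (∀ α ∈ 𝕏, Dominates T α (-1) α 0 ∧ Dominates T α 0 α 1) := by
  simp only [max_le_iff, le_min_iff] at h
  have hT : ∀ α β t, 2 ≤ t → T α β t = 0 := fun α β _ => tail_eq_zero α β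
  constructor
  · rintro β (rfl | rfl | rfl) <;>
      refine ⟨dominates_of_lt_two hT (by norm_num) le_rfl ?_ ?_,
        dominates_of_lt_two hT (by norm_num) le_rfl ?_ ?_⟩ <;>
      intro n hn <;> interval_cases n <;> norm_num [tail, rate] <;> linarith
  · rintro α (rfl | rfl | rfl) <;>
      refine ⟨dominates_of_lt_two hT le_rfl (by norm_num) ?_ ?_,
        dominates_of_lt_two hT le_rfl (by norm_num) ?_ ?_⟩ <;>
      intro n hn <;> interval_cases n <;> norm_num [tail, rate] <;> linarith

theorem dominates_tail_rate_iff (hc2 : 0 ≤ c2) (hc00 : 0 ≤ c00) :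
    (∀ α β γ δ : ℤ, α ∈ 𝕏 → β ∈ 𝕏 → γ ∈ 𝕏 → δ ∈ 𝕏 → α ≤ γ → β ≤ δ →
      Dominates T α β γ δ) ↔
    max c2 c00 ≤ min c01 c10 ∧ max c01 c10 ≤ c11 + c2 := by
  constructor
  · intro h
    exact le_of_dominates_covers (h _ _ _ _ (by simp) (by simp) (by simp) (by simp) (by simp) le_rfl)
      (h _ _ _ _ (by simp) (by simp) (by simp) (by simp) le_rfl (by simp))
      (h _ _ _ _ (by simp) (by simp) (by simp) (by simp) le_rfl (by simp))
      (h _ _ _ _ (by simp) (by simp) (by simp) (by simp) (by simp) le_rfl)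
  · intro h α β γ δ hα hβ hγ hδ hαγ hβδ
    obtain ⟨hfst, hsnd⟩ := dominates_covers_of_le h hc2 hc00
    exact dominates_of_covers hfst hsnd hα hβ hγ hδ hαγ hβδ

end Rates

end TwoSpecies

open TwoSpecies in
theorem stmt17_general (c01 c2 c11 c00 c10 : Bool → ℝ)
    (h2 : ∀ z, 0 ≤ c2 z)
    (h00 : ∀ z, 0 ≤ c00 z)
    (Γ : Bool → ℤ → ℤ → ℕ → ℝ)
    (hΓ : ∀ z α β k, Γ z α β k =
      if α = 0 ∧ β = -1 ∧ k = 1 then c01 z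
      else if α = 1 ∧ β = -1 ∧ k = 2 then c2 z
      else if α = 1 ∧ β = -1 ∧ k = 1 then c11 z
      else if α = 0 ∧ β = 0 ∧ k = 1 then c00 z
      else if α = 1 ∧ β = 0 ∧ k = 1 then c10 z
      else 0)
    (S : Bool → ℤ → ℤ → ℤ → ℝ)
    (hS : ∀ z α β t, S z α β t = ∑' k' : ℕ, if t < (k' : ℤ) then Γ z α β k' else 0) :
    (∀ z : Bool, ∀ α β γ δ : ℤ,
      α ∈ ({-1, 0, 1} : Set ℤ) → β ∈ ({-1, 0, 1} : Set ℤ) →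
      γ ∈ ({-1, 0, 1} : Set ℤ) → δ ∈ ({-1, 0, 1} : Set ℤ) →
      α ≤ γ → β ≤ δ →
      (∀ l : ℕ, S z α β (δ - β + l) ≤ S z γ δ l) ∧
      (∀ k : ℕ, S z γ δ (γ - α + k) ≤ S z α β k))
    ↔ (∀ z : Bool,
        max (c2 z) (c00 z) ≤ min (c01 z) (c10 z) ∧
        max (c01 z) (c10 z) ≤ c11 z + c2 z) := by
  have hΓ_eq : ∀ z, Γ z = rate (c01 z) (c2 z) (c11 z) (c00 z) (c10 z) := fun z => by
    funext α β k
    exact hΓ z α β k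
  have hS_eq : ∀ z, S z = tail (Γ z) := fun z => by
    funext α β t
    rw [hS, hΓ_eq]
    exact tsum_ite_lt_of_support_subset (fun _ => rate_eq_zero _ _ _ _ _ α β) t
  refine forall_congr' fun z => ?_
  rw [hS_eq, hΓ_eq]
  exact dominates_tail_rate_iff (h2 z) (h00 z)

/-- Attractiveness characterization for the two-species exclusion process. -/
theorem stmt17 (c01 c2 c11 c00 c10 : Bool → ℝ)
    (h01 : ∀ z, 0 ≤ c01 z) (h2 : ∀ z, 0 ≤ c2 z) (h11 : ∀ z, 0 ≤ c11 z)
    (h00 : ∀ z, 0 ≤ c00 z) (h10 : ∀ z, 0 ≤ c10 z)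
    (Γ : Bool → ℤ → ℤ → ℕ → ℝ)
    (hΓ : ∀ z α β k, Γ z α β k =
      if α = 0 ∧ β = -1 ∧ k = 1 then c01 z
      else if α = 1 ∧ β = -1 ∧ k = 2 then c2 z
      else if α = 1 ∧ β = -1 ∧ k = 1 then c11 z
      else if α = 0 ∧ β = 0 ∧ k = 1 then c00 z
      else if α = 1 ∧ β = 0 ∧ k = 1 then c10 z
      else 0)
    (S : Bool → ℤ → ℤ → ℤ → ℝ)
    (hS : ∀ z α β t, S z α β t = ∑' k' : ℕ, if t < (k' : ℤ) then Γ z α β k' else 0) :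
    (∀ z : Bool, ∀ α β γ δ : ℤ,
      α ∈ ({-1, 0, 1} : Set ℤ) → β ∈ ({-1, 0, 1} : Set ℤ) →
      γ ∈ ({-1, 0, 1} : Set ℤ) → δ ∈ ({-1, 0, 1} : Set ℤ) →
      α ≤ γ → β ≤ δ →
      (∀ l : ℕ, S z α β (δ - β + l) ≤ S z γ δ l) ∧
      (∀ k : ℕ, S z γ δ (γ - α + k) ≤ S z α β k))
    ↔ (∀ z : Bool,
        max (c2 z) (c00 z) ≤ min (c01 z) (c10 z) ∧
        max (c01 z) (c10 z) ≤ c11 z + c2 z) :=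
  stmt17_general c01 c2 c11 c00 c10 h2 h00 Γ hΓ S hS
end
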